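/- arXiv:2505.04355 — 2 statements merged into one kernel-verified Lean document; each statement's English description precedes it below -/
import Mathlib

section
/- With M^μ as above and μᵢ ∉ ℤ for all i, M^μ is a simple 𝔤-module: any nonzero 𝔤-submodule equals M^μ. -/
/-!
STATEMENT 2: For μ ∈ ℂ^{n+1} with μᵢ ∉ ℤ for all i, M^μ is a simple 𝔤-module
(𝔤 = 𝔰𝔩_{n+1}(ℂ) or 𝔤𝔩_{n+1}(ℂ)): any nonzero submodule equals M^μ.

M^μ is modelled on its monomial basis t^{μ+m}, m ∈ ℤ^{n+1}, Σm = 0; the root vectors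
x_{εᵢ−εⱼ} act as tᵢ∂/∂tⱼ, a diagonal element x acts on t^λ by Σ xᵢλᵢ.  A 𝔤-submodule
is a subspace stable under all these operators.
-/

open Finsupp

def ExpLat (n : ℕ) : Type := {m : Fin (n + 1) → ℤ // ∑ l, m l = 0}

abbrev CuspMod (n : ℕ) : Type := ExpLat n →₀ ℂ

def shiftFun {n : ℕ} (i j : Fin (n + 1)) (m : Fin (n + 1) → ℤ) : Fin (n + 1) → ℤ :=
  fun l => m l + (if l = i then 1 else 0) - (if l = j then 1 else 0)

lemma shiftFun_sum {n : ℕ} (i j : Fin (n + 1)) (m : Fin (n + 1) → ℤ)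
    (h : ∑ l, m l = 0) : ∑ l, shiftFun i j m l = 0 := by
  simp [shiftFun, Finset.sum_add_distrib, Finset.sum_sub_distrib, h]

def shift {n : ℕ} (i j : Fin (n + 1)) (m : ExpLat n) : ExpLat n :=
  ⟨shiftFun i j m.1, shiftFun_sum i j m.1 m.2⟩

/-- The root operator `x_{εᵢ−εⱼ} = tᵢ ∂/∂tⱼ`. -/
noncomputable def xOp {n : ℕ} (μ : Fin (n + 1) → ℂ) (i j : Fin (n + 1)) :
    CuspMod n →ₗ[ℂ] CuspMod n :=
  Finsupp.lsum ℂ fun m => (μ j + (m.1 j : ℂ)) • Finsupp.lsingle (shift i j m)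

/-- Action of the diagonal torus element `x`. -/
noncomputable def hOp {n : ℕ} (μ : Fin (n + 1) → ℂ) (x : Fin (n + 1) → ℂ) :
    CuspMod n →ₗ[ℂ] CuspMod n :=
  Finsupp.lsum ℂ fun m => (∑ l, x l * (μ l + (m.1 l : ℂ))) • Finsupp.lsingle m

/-! The torus acts diagonally on the monomials `t^(μ+m)` with weights that separate them, so a
torus-stable subspace contains every monomial occurring in one of its elements. A root operator
`tᵢ∂/∂tⱼ` maps `t^(μ+m)` to `(μⱼ + mⱼ) t^(μ+m+εᵢ-εⱼ)`, a nonzero multiple because `μⱼ ∉ ℤ`, and such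
unit transfers connect any two exponents of sum zero; so one monomial generates everything. -/

namespace Finsupp

variable {K α ι : Type*} [Field K]

theorem single_one_mem_of_mem_support {N : Submodule K (α →₀ K)} (w : ι → α → K)
    (hsep : ∀ a b, a ≠ b → ∃ i, w i a ≠ w i b) (hN : ∀ i, ∀ f ∈ N, w i • f ∈ N)
    {f : α →₀ K} (hf : f ∈ N) {m : α} (hm : m ∈ f.support) : single m 1 ∈ N := by
  classical
  induction hk : f.support.card using Nat.strong_induction_on generalizing f with
  | _ k ih =>
  by_cases hfm : f.support ⊆ {m}
  · have hsingle : (f m)⁻¹ • f = single m 1 := by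
      ext a
      by_cases ha : a = m
      · subst ha; simp [inv_mul_cancel₀ (mem_support_iff.1 hm)]
      · have : f a = 0 := notMem_support_iff.1 fun h => ha (Finset.mem_singleton.1 (hfm h))
        simp [this, Ne.symm ha]
    exact hsingle ▸ N.smul_mem _ hf
  obtain ⟨m', hm', hm'm⟩ := Finset.not_subset.1 hfm
  obtain ⟨i, hi⟩ := hsep m m' (Ne.symm (by simpa using hm'm))
  -- `w i - w i m'` kills the coefficient at `m'` and keeps the one at `m`.
  set g := w i • f - w i m' • f with hg
  have hg_apply (a : α) : g a = (w i a - w i m') * f a := by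
    simp [hg, sub_mul]
  have hgN : g ∈ N := N.sub_mem (hN i f hf) (N.smul_mem _ hf)
  have hmg : m ∈ g.support := by
    rw [mem_support_iff, hg_apply]
    exact mul_ne_zero (sub_ne_zero.2 hi) (mem_support_iff.1 hm)
  have hgsupp : g.support ⊆ f.support.erase m' := fun a ha => by
    rw [mem_support_iff, hg_apply] at ha
    exact Finset.mem_erase.2
      ⟨fun h => by simp [h] at ha, mem_support_iff.2 (right_ne_zero_of_mul ha)⟩
  have hcard : g.support.card < k :=
    calc g.support.card ≤ (f.support.erase m').card := Finset.card_le_card hgsupp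
      _ < k := hk ▸ Finset.card_erase_lt_of_mem hm'
  exact ih _ hcard hgN hmg rfl

theorem eq_top_of_forall_single_one_mem {N : Submodule K (α →₀ K)}
    (h : ∀ a, single a 1 ∈ N) : N = ⊤ := by
  rw [eq_top_iff, ← (Finsupp.basisSingleOne (R := K) (ι := α)).span_eq, Submodule.span_le,
    coe_basisSingleOne]
  exact Set.range_subset_iff.2 h

end Finsupp

namespace ExpLat

variable {n : ℕ}

theorem ext {a b : ExpLat n} (h : ∀ l, a.1 l = b.1 l) : a = b :=
  Subtype.ext (funext h)

theorem exists_lt_of_ne {a b : ExpLat n} (hab : a ≠ b) : ∃ i, a.1 i < b.1 i := by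
  by_contra! hle
  have hsum : ∑ l, b.1 l = ∑ l, a.1 l := by rw [a.2, b.2]
  exact hab (ExpLat.ext fun l =>
    ((Finset.sum_eq_sum_iff_of_le fun l _ => hle l).1 hsum l (Finset.mem_univ l)).symm)

theorem sum_natAbs_sub_shift_lt {a b : ExpLat n} {i j : Fin (n + 1)} (hij : i ≠ j)
    (hi : a.1 i < b.1 i) (hj : b.1 j < a.1 j) :
    ∑ l, (b.1 l - (shift i j a).1 l).natAbs < ∑ l, (b.1 l - a.1 l).natAbs := by
  refine Finset.sum_lt_sum (fun l _ => ?_) ⟨i, Finset.mem_univ i, ?_⟩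
  · simp only [shift, shiftFun]
    rcases eq_or_ne l i with rfl | hli
    · simp only [if_pos, if_neg hij]
      omega
    · rcases eq_or_ne l j with rfl | hlj
      · simp only [if_neg hli, if_pos]
        omega
      · simp only [if_neg hli, if_neg hlj]
        omega
  · simp only [shift, shiftFun, if_neg hij, if_pos]
    omega

theorem shift_induction {P : ExpLat n → Prop}
    (hP : ∀ m i j, i ≠ j → P m → P (shift i j m)) {a : ExpLat n} (ha : P a) (b : ExpLat n) :
    P b := by
  induction hk : ∑ l, (b.1 l - a.1 l).natAbs using Nat.strong_induction_on generalizing a with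
  | _ k ih =>
  by_cases hab : a = b
  · exact hab ▸ ha
  obtain ⟨i, hi⟩ := exists_lt_of_ne hab
  obtain ⟨j, hj⟩ := exists_lt_of_ne (Ne.symm hab)
  have hij : i ≠ j := by rintro rfl; omega
  exact ih _ (hk ▸ sum_natAbs_sub_shift_lt hij hi hj) (hP a i j hij ha) rfl

end ExpLat

section CuspMod

variable {n : ℕ}

def torusWeight (μ x : Fin (n + 1) → ℂ) (m : ExpLat n) : ℂ :=
  ∑ l, x l * (μ l + (m.1 l : ℂ))

theorem torusWeight_pi_single (μ : Fin (n + 1) → ℂ) (l : Fin (n + 1)) (m : ExpLat n) :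
    torusWeight μ (Pi.single l 1) m = μ l + (m.1 l : ℂ) := by
  simp [torusWeight, Pi.single_apply]

theorem exists_torusWeight_ne (μ : Fin (n + 1) → ℂ) {a b : ExpLat n} (hab : a ≠ b) :
    ∃ x, torusWeight μ x a ≠ torusWeight μ x b := by
  obtain ⟨l, hl⟩ : ∃ l, a.1 l ≠ b.1 l := by
    by_contra! h
    exact hab (ExpLat.ext h)
  exact ⟨Pi.single l 1, by simpa [torusWeight_pi_single] using hl⟩

theorem hOp_eq_torusWeight_smul (μ x : Fin (n + 1) → ℂ) (f : CuspMod n) :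
    hOp μ x f = torusWeight μ x • f := by
  ext m
  induction f using Finsupp.induction_linear with
  | zero => simp
  | add f g hf hg => simp [hf, hg, mul_add]
  | single a c =>
    rcases eq_or_ne a m with rfl | h
    · simp [hOp, torusWeight, Finsupp.smul_single]
    · simp [hOp, h]

theorem xOp_single (μ : Fin (n + 1) → ℂ) (i j : Fin (n + 1)) (m : ExpLat n) (c : ℂ) :
    xOp μ i j (single m c) = single (shift i j m) ((μ j + (m.1 j : ℂ)) * c) := by
  simp [xOp, Finsupp.smul_single]

theorem add_intCast_ne_zero {R : Type*} [Ring R] {z : R} (hz : ∀ k : ℤ, z ≠ k) (a : ℤ) :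
    z + a ≠ 0 := fun h => hz (-a) (by rw [Int.cast_neg]; exact eq_neg_of_add_eq_zero_left h)

theorem single_shift_mem {μ : Fin (n + 1) → ℂ} (hμ : ∀ i : Fin (n + 1), ∀ k : ℤ, μ i ≠ (k : ℂ))
    {N : Submodule ℂ (CuspMod n)}
    (hXstab : ∀ i j : Fin (n + 1), i ≠ j → ∀ f ∈ N, xOp μ i j f ∈ N)
    {i j : Fin (n + 1)} (hij : i ≠ j) {a : ExpLat n} (ha : single a (1 : ℂ) ∈ N) :
    single (shift i j a) (1 : ℂ) ∈ N := by
  have hx := N.smul_mem (μ j + (a.1 j : ℂ))⁻¹ (hXstab i j hij _ ha)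
  rwa [xOp_single, mul_one, Finsupp.smul_single, smul_eq_mul,
    inv_mul_cancel₀ (add_intCast_ne_zero (hμ j) _)] at hx

end CuspMod

/-- `M^μ` is simple — every nonzero subspace stable under all root
operators and the torus action is all of `M^μ`. -/
theorem cuspMod_simple (n : ℕ) (μ : Fin (n + 1) → ℂ)
    (hμ : ∀ i : Fin (n + 1), ∀ k : ℤ, μ i ≠ (k : ℂ))
    (N : Submodule ℂ (CuspMod n))
    (hXstab : ∀ i j : Fin (n + 1), i ≠ j → ∀ f ∈ N, xOp μ i j f ∈ N)
    (hHstab : ∀ x : Fin (n + 1) → ℂ, ∀ f ∈ N, hOp μ x f ∈ N)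
    (hN : N ≠ ⊥) :
    N = ⊤ := by
  obtain ⟨f, hfN, hf0⟩ := Submodule.exists_mem_ne_zero_of_ne_bot hN
  obtain ⟨m, hm⟩ := Finsupp.support_nonempty_iff.2 hf0
  have hm_mem : single m 1 ∈ N :=
    single_one_mem_of_mem_support (torusWeight μ) (fun _ _ => exists_torusWeight_ne μ)
      (fun x f hf => hOp_eq_torusWeight_smul μ x f ▸ hHstab x f hf) hfN hm
  exact eq_top_of_forall_single_one_mem fun b =>
    ExpLat.shift_induction (P := fun a => single a 1 ∈ N)
      (fun _ _ _ hij => single_shift_mem hμ hXstab hij) hm_mem b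
end

section
/- Let G₀ be a compact locally L-analytic group, H₀ ≤ G₀ an open normal subgroup of finite index n with n invertible in K, and let D_r(G₀) ⊇ D_r(H₀) be compatible Banach completions of the distribution algebras, with D_r(G₀) free of rank n as a left and right D_r(H₀)-module on coset representatives. Then a finitely generated D_r(G₀)-module M is semisimple over D_r(G₀) if and only if it is semisimple over D_r(H₀). -/
/-!
If `M` is semisimple over `R`, choose an `R`-linear projection `π` onto an `A`-submodule `p` and
average it: `|G|⁻¹ ∑_g u(g) π u(g)⁻¹`. Conjugation by `u(g)` preserves `ι R`, so the average still
commutes with `ι R`; by reindexing it commutes with every `u(g)`, hence with all of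
`A = ∑_g u(g) ι(R)`, and it is still a projection onto `p`. Its kernel is an `A`-complement of `p`.

Conversely it suffices to treat a simple `A`-module `V`. It is generated over `R` by the `u(g) v`,
so it has a maximal `R`-submodule `P`; its translates `{v | u(g) v ∈ P}` are maximal too. Their
intersection lies in the largest `A`-submodule contained in `P`, which is `0`; hence `V` embeds into
the semisimple `R`-module `∏_g V ⧸ {v | u(g) v ∈ P}`.
-/

open Finset

section ConjugateSum

variable {E G : Type*} [Ring E] [Group G] [Fintype G] (ρ : G →* Eˣ)

theorem commute_sum_conj (f : E) (h : G) :
    Commute (ρ h : E) (∑ g, (ρ g : E) * f * ↑(ρ g)⁻¹) := by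
  rw [Commute, SemiconjBy, mul_sum, sum_mul]
  refine Fintype.sum_equiv (Equiv.mulLeft h) _ _ fun g => ?_
  simp [mul_assoc]

theorem sum_conj_mem_centralizer {S : Set E}
    (hS : ∀ g, ∀ s ∈ S, (ρ g : E) * s * ↑(ρ g)⁻¹ ∈ S) {f : E} (hf : f ∈ S.centralizer) :
    ∑ g, (ρ g : E) * f * ↑(ρ g)⁻¹ ∈ S.centralizer := by
  rw [← Subsemiring.coe_centralizer]
  refine sum_mem fun g _ s hs => ?_
  obtain ⟨t, ht, rfl⟩ : ∃ t ∈ S, (ρ g : E) * t * ↑(ρ g)⁻¹ = s :=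
    ⟨_, by simpa using hS g⁻¹ s hs, by simp [mul_assoc]⟩
  have := hf t ht
  simp only [mul_assoc, Units.inv_mul_cancel_left]
  rw [← mul_assoc t, this, mul_assoc]

end ConjugateSum

theorem exists_units_mul_eq_mul_units {R A G : Type*} [Ring R] [Ring A] [Group G] {ι : R →+* A}
    {u : G →* Aˣ} (hnorm : ∀ (g : G) (x : R), ∃ y : R, (u g : A) * ι x * ((u g)⁻¹ : Aˣ) = ι y)
    (g : G) (x : R) : ∃ y : R, (u g : A) * ι x = ι y * u g := by
  obtain ⟨y, hy⟩ := hnorm g x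
  exact ⟨y, by rw [← hy, Units.inv_mul_cancel_right]⟩

theorem Submodule.isComplemented_of_commute_of_proj {A M : Type*} [Ring A] [AddCommGroup M]
    [Module A M] (p : Submodule A M) {φ : AddMonoid.End M}
    (hφ : ∀ a, Commute (Module.toAddMonoidEnd A M a) φ) (hmem : ∀ m, φ m ∈ p)
    (hid : ∀ m ∈ p, φ m = m) : IsComplemented p :=
  let f : M →ₗ[A] p :=
    { toFun m := ⟨φ m, hmem m⟩
      map_add' m m' := Subtype.ext (map_add φ m m')
      map_smul' a m := Subtype.ext (DFunLike.congr_fun (hφ a) m).symm }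
  ⟨_, LinearMap.isCompl_of_proj (f := f) fun m => Subtype.ext (hid m m.2)⟩

section Averaging

variable {A G M : Type*} [Ring A] [Group G] [Fintype G] [AddCommGroup M] [Module A M]
  [Invertible (Fintype.card G : A)]

local notation "T" => Module.toAddMonoidEnd A M

def conjAverage (u : G →* Aˣ) (f : AddMonoid.End M) : AddMonoid.End M :=
  T ⅟(Fintype.card G : A) * ∑ g, T (u g) * f * T ↑(u g)⁻¹

theorem conjAverage_apply (u : G →* Aˣ) (f : AddMonoid.End M) (m : M) :
    conjAverage u f m = ⅟(Fintype.card G : A) • ∑ g, (u g : A) • f ((↑(u g)⁻¹ : A) • m) :=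
  congrArg _ (AddMonoidHom.finsetSum_apply _ _ _)

theorem conjAverage_mem (u : G →* Aˣ) {f : AddMonoid.End M} {p : Submodule A M}
    (hf : ∀ m, f m ∈ p) (m : M) : conjAverage u f m ∈ p := by
  rw [conjAverage_apply]
  exact p.smul_mem _ (p.sum_mem fun g _ => p.smul_mem _ (hf _))

theorem conjAverage_apply_of_mem (u : G →* Aˣ) {f : AddMonoid.End M} {p : Submodule A M}
    (hf : ∀ m ∈ p, f m = m) {m : M} (hm : m ∈ p) : conjAverage u f m = m := by
  have hterm : ∀ g, (u g : A) • f ((↑(u g)⁻¹ : A) • m) = m := fun g => by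
    rw [hf _ (p.smul_mem _ hm), ← mul_smul, Units.mul_inv, one_smul]
  simp only [conjAverage_apply, hterm, sum_const, card_univ, ← Nat.cast_smul_eq_nsmul A,
    smul_smul, invOf_mul_self, one_smul]

theorem commute_conjAverage {R : Type*} [Ring R] {ι : R →+* A} {u : G →* Aˣ}
    (hnorm : ∀ (g : G) (x : R), ∃ y : R, (u g : A) * ι x * ((u g)⁻¹ : Aˣ) = ι y)
    (hspan : Function.Surjective fun r : G → R => ∑ g, (u g : A) * ι (r g))
    {f : AddMonoid.End M} (hf : ∀ x, Commute (T (ι x)) f) (a : A) :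
    Commute (T a) (conjAverage u f) := by
  let ρ := (Units.map (T : A →* AddMonoid.End M)).comp u
  let S := Set.range fun x => T (ι x)
  have hS : ∀ g, ∀ s ∈ S, (ρ g : AddMonoid.End M) * s * ↑(ρ g)⁻¹ ∈ S := by
    rintro g _ ⟨x, rfl⟩
    obtain ⟨y, hy⟩ := hnorm g x
    exact ⟨y, by beta_reduce; rw [← hy, map_mul, map_mul]; rfl⟩
  have hsum : Commute (T a) (∑ g, (ρ g : AddMonoid.End M) * f * ↑(ρ g)⁻¹) := by
    obtain ⟨r, rfl⟩ := hspan a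
    simp only [map_sum, map_mul]
    refine Commute.sum_left _ _ _ fun g _ => (commute_sum_conj ρ f g).mul_left ?_
    exact sum_conj_mem_centralizer ρ hS (fun _ ⟨x, hx⟩ => hx ▸ hf x) _ ⟨r g, rfl⟩
  exact ((Nat.cast_commute _ a).invOf_left.map T).symm.mul_right hsum

end Averaging

section Twist

variable {R A G M : Type*} [Ring R] [Ring A] [Group G] [AddCommGroup M] [Module A M] [Module R M]
  {ι : R →+* A} {u : G →* Aˣ}
  (hnorm : ∀ (g : G) (x : R), ∃ y : R, (u g : A) * ι x * ((u g)⁻¹ : Aˣ) = ι y)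
  (hcomp : ∀ (x : R) (m : M), x • m = ι x • m)

def twist (g : G) (Q : Submodule R M) : Submodule R M where
  carrier := {m | (u g : A) • m ∈ Q}
  add_mem' hm hm' := by simpa only [Set.mem_ofPred_eq, smul_add] using Q.add_mem hm hm'
  zero_mem' := by simpa only [Set.mem_ofPred_eq, smul_zero] using Q.zero_mem
  smul_mem' x m hm := by
    obtain ⟨y, hy⟩ := exists_units_mul_eq_mul_units hnorm g x
    simpa only [Set.mem_ofPred_eq, hcomp, ← mul_smul, hy] using Q.smul_mem y hm

theorem mem_twist {g : G} {Q : Submodule R M} {m : M} :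
    m ∈ twist hnorm hcomp g Q ↔ (u g : A) • m ∈ Q :=
  Iff.rfl

theorem twist_inv_twist (g : G) (Q : Submodule R M) :
    twist hnorm hcomp g⁻¹ (twist hnorm hcomp g Q) = Q := by
  ext m
  rw [mem_twist, mem_twist, ← mul_smul, ← Units.val_mul, ← map_mul, mul_inv_cancel, map_one,
    Units.val_one, one_smul]

def twistOrderIso (g : G) : Submodule R M ≃o Submodule R M :=
  Equiv.toOrderIso
    { toFun := twist hnorm hcomp g
      invFun := twist hnorm hcomp g⁻¹
      left_inv := twist_inv_twist hnorm hcomp g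
      right_inv Q := by simpa using twist_inv_twist hnorm hcomp g⁻¹ Q }
    (fun _ _ h _ hm => h hm) (fun _ _ h _ hm => h hm)

theorem isCoatom_twist {P : Submodule R M} (hP : IsCoatom P) (g : G) :
    IsCoatom (twist hnorm hcomp g P) :=
  ((twistOrderIso hnorm hcomp g).isCoatom_iff P).2 hP

theorem iInf_twist_eq_bot [Fintype G] [IsSimpleModule A M]
    (hspan : Function.Surjective fun r : G → R => ∑ g, (u g : A) * ι (r g))
    {P : Submodule R M} (hP : P ≠ ⊤) : ⨅ g, twist hnorm hcomp g P = ⊥ := by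
  let N : Submodule A M :=
    { carrier := {m | ∀ a : A, a • m ∈ P}
      add_mem' := fun hm hm' a => by simpa only [smul_add] using P.add_mem (hm a) (hm' a)
      zero_mem' := fun a => by simpa only [smul_zero] using P.zero_mem
      smul_mem' := fun b m hm a => by simpa only [← mul_smul] using hm (a * b) }
  have hN : N = ⊥ := (eq_bot_or_eq_top N).resolve_right fun h =>
    hP (eq_top_iff.2 fun m _ => by simpa using (h ▸ Submodule.mem_top : m ∈ N) 1)
  refine eq_bot_iff.2 fun m hm => ?_
  suffices m ∈ N by rwa [hN] at this
  intro a
  obtain ⟨r, rfl⟩ := hspan a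
  rw [sum_smul]
  refine P.sum_mem fun g _ => ?_
  rw [mul_smul, ← hcomp, ← mem_twist hnorm hcomp]
  exact Submodule.smul_mem _ _ ((Submodule.mem_iInf _).1 hm g)

end Twist

section Restriction

variable {R A G M : Type*} [Ring R] [Ring A] [Group G] [Fintype G] [AddCommGroup M] [Module A M]
  [Module R M] {ι : R →+* A} {u : G →* Aˣ}

theorem finite_restrict_of_isSimpleModule [IsSimpleModule A M]
    (hnorm : ∀ (g : G) (x : R), ∃ y : R, (u g : A) * ι x * ((u g)⁻¹ : Aˣ) = ι y)
    (hspan : Function.Surjective fun r : G → R => ∑ g, (u g : A) * ι (r g))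
    (hcomp : ∀ (x : R) (m : M), x • m = ι x • m) :
    Module.Finite R M := by
  classical
  have := IsSimpleModule.nontrivial A M
  obtain ⟨v, hv⟩ := exists_ne (0 : M)
  refine ⟨⟨univ.image fun g => (u g : A) • v, eq_top_iff.2 fun m _ => ?_⟩⟩
  obtain ⟨a, rfl⟩ := IsSimpleModule.toSpanSingleton_surjective A hv m
  obtain ⟨r, rfl⟩ := hspan a
  rw [LinearMap.toSpanSingleton_apply, sum_smul]
  refine sum_mem fun g _ => ?_
  obtain ⟨y, hy⟩ := exists_units_mul_eq_mul_units hnorm g (r g)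
  rw [hy, mul_smul, ← hcomp]
  exact Submodule.smul_mem _ _ (Submodule.subset_span (by simp))

theorem isSemisimpleModule_restrict_of_isSimpleModule [IsSimpleModule A M]
    (hnorm : ∀ (g : G) (x : R), ∃ y : R, (u g : A) * ι x * ((u g)⁻¹ : Aˣ) = ι y)
    (hspan : Function.Surjective fun r : G → R => ∑ g, (u g : A) * ι (r g))
    (hcomp : ∀ (x : R) (m : M), x • m = ι x • m) :
    IsSemisimpleModule R M := by
  have := IsSimpleModule.nontrivial A M
  have := finite_restrict_of_isSimpleModule hnorm hspan hcomp
  obtain ⟨P, hP⟩ := IsCoatomic.exists_coatom (Submodule R M)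
  have (g : G) : IsSimpleModule R (M ⧸ twist hnorm hcomp g P) :=
    isSimpleModule_iff_isCoatom.2 (isCoatom_twist hnorm hcomp hP g)
  refine .of_injective (LinearMap.pi fun g => (twist hnorm hcomp g P).mkQ) ?_
  rw [← LinearMap.ker_eq_bot, LinearMap.ker_pi]
  simpa only [Submodule.ker_mkQ] using iInf_twist_eq_bot hnorm hcomp hspan hP.1

theorem isSemisimpleModule_restrict_of_isSemisimpleModule [IsSemisimpleModule A M]
    (hnorm : ∀ (g : G) (x : R), ∃ y : R, (u g : A) * ι x * ((u g)⁻¹ : Aˣ) = ι y)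
    (hspan : Function.Surjective fun r : G → R => ∑ g, (u g : A) * ι (r g))
    (hcomp : ∀ (x : R) (m : M), x • m = ι x • m) :
    IsSemisimpleModule R M := by
  -- lets the simple `A`-submodules of `M` inherit their `R`-module structure from `M`
  let : SMul R A := ⟨fun x a => ι x * a⟩
  have : IsScalarTower R A M := ⟨fun x a m => by rw [hcomp, ← mul_smul]; rfl⟩
  obtain ⟨s, e, -, hs⟩ := IsSemisimpleModule.exists_linearEquiv_dfinsupp A M
  have (p : s) : IsSemisimpleModule R p.1 :=
    have := hs p
    isSemisimpleModule_restrict_of_isSimpleModule hnorm hspan fun x m => Subtype.ext (hcomp x m)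
  exact .congr (e.restrictScalars R)

theorem isSemisimpleModule_of_isSemisimpleModule_restrict [Invertible (Fintype.card G : A)]
    [IsSemisimpleModule R M]
    (hnorm : ∀ (g : G) (x : R), ∃ y : R, (u g : A) * ι x * ((u g)⁻¹ : Aˣ) = ι y)
    (hspan : Function.Surjective fun r : G → R => ∑ g, (u g : A) * ι (r g))
    (hcomp : ∀ (x : R) (m : M), x • m = ι x • m) :
    IsSemisimpleModule A M := by
  refine (isSemisimpleModule_iff A M).2 ⟨fun p => ?_⟩
  let P : Submodule R M :=
    { p.toAddSubmonoid with smul_mem' := fun x m hm => (hcomp x m).symm ▸ p.smul_mem (ι x) hm }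
  obtain ⟨q, hq⟩ := exists_isCompl P
  let f : M →ₗ[R] M := P.subtype ∘ₗ P.projectionOnto q hq
  have hf (x : R) : Commute (Module.toAddMonoidEnd A M (ι x)) f.toAddMonoidHom := by
    ext m
    change ι x • f m = f (ι x • m)
    rw [← hcomp, ← hcomp, f.map_smul]
  exact p.isComplemented_of_commute_of_proj (commute_conjAverage hnorm hspan hf)
    (conjAverage_mem u fun m => (P.projectionOnto q hq m).2)
    (fun _ => conjAverage_apply_of_mem u (f := f.toAddMonoidHom) fun m hm =>
      congrArg Subtype.val (P.projectionOnto_apply_left hq ⟨m, hm⟩))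

end Restriction

theorem semisimple_iff_semisimple_over_finite_index_subalgebra_general
    (K : Type*) [Field K]
    (A : Type*) [Ring A] [Algebra K A]
    (R : Type*) [Ring R] (ι : R →+* A)
    (G : Type*) [Group G] [Fintype G]
    (hn : ((Fintype.card G : K)) ≠ 0)
    (u : G →* Aˣ)
    -- the units u(g) normalize the subring ι(R)
    (hnorm : ∀ (g : G) (x : R), ∃ y : R, (u g : A) * ι x * ((u g)⁻¹ : Aˣ) = ι y)
    -- A is free as a left and as a right R-module on the u(g)
    (hfree_left : Function.Bijective
      (fun r : G → R => ∑ g : G, (u g : A) * ι (r g)))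
    -- a finitely generated A-module M, with its restricted R-module structure
    (M : Type*) [AddCommGroup M] [Module A M]
    [Module R M] (hcomp : ∀ (x : R) (m : M), x • m = ι x • m) :
    IsSemisimpleModule A M ↔ IsSemisimpleModule R M := by
  have := invertibleOfNonzero hn
  have : Invertible (Fintype.card G : A) :=
    (Invertible.map (algebraMap K A) _).copy _ (map_natCast _ _).symm
  exact ⟨fun _ => isSemisimpleModule_restrict_of_isSemisimpleModule hnorm hfree_left.2 hcomp,
    fun _ => isSemisimpleModule_of_isSemisimpleModule_restrict hnorm hfree_left.2 hcomp⟩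

theorem semisimple_iff_semisimple_over_finite_index_subalgebra
    (K : Type*) [Field K]
    (A : Type*) [Ring A] [Algebra K A]
    (R : Type*) [Ring R] (ι : R →+* A) (hι : Function.Injective ι)
    (G : Type*) [Group G] [Fintype G]
    (hn : ((Fintype.card G : K)) ≠ 0)
    (u : G →* Aˣ)
    -- the units u(g) normalize the subring ι(R)
    (hnorm : ∀ (g : G) (x : R), ∃ y : R, (u g : A) * ι x * ((u g)⁻¹ : Aˣ) = ι y)
    -- A is free as a left and as a right R-module on the u(g)
    (hfree_left : Function.Bijective
      (fun r : G → R => ∑ g : G, (u g : A) * ι (r g)))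
    (hfree_right : Function.Bijective
      (fun r : G → R => ∑ g : G, ι (r g) * (u g : A)))
    -- a finitely generated A-module M, with its restricted R-module structure
    (M : Type*) [AddCommGroup M] [Module A M] [Module.Finite A M]
    [Module R M] (hcomp : ∀ (x : R) (m : M), x • m = ι x • m) :
    IsSemisimpleModule A M ↔ IsSemisimpleModule R M :=
  semisimple_iff_semisimple_over_finite_index_subalgebra_general K A R ι G hn u hnorm hfree_left M
    hcomp
end
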